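/- Let G = (A, Ω) be a Müller game and suppose there exists a nonempty X ⊆ V such that A(X) is a subarena that is a 1-trap in A and Player 0 fully wins G(X). Let S_max be the union of all such sets X. Then A(S_max) is a subarena that is a 1-trap, Player 0 fully wins G(S_max), Win_0(G) = S_max, and Win_1(G) = V ∖ S_max. -/

import Mathlib

open Set

/-- An arena: a finite directed bipartite graph where every vertex has an
outgoing edge.  The vertex set is `V0 ∪ V1` inside the finite type `α`. -/
structure Arena (α : Type) [Fintype α] where
  V0 : Set α
  V1 : Set α
  E : Set (α × α)
  disj : Disjoint V0 V1
  bipartite : E ⊆ (V0 ×ˢ V1) ∪ (V1 ×ˢ V0)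
  succ : ∀ v ∈ V0 ∪ V1, ∃ u, (v, u) ∈ E

variable {α : Type} [Fintype α]

/-- The set of positions of the arena. -/
def Arena.V (A : Arena α) : Set α := A.V0 ∪ A.V1

/-- The positions of Player σ (σ ∈ {0,1}). -/
def Arena.P (A : Arena α) (σ : Fin 2) : Set α := if σ = 0 then A.V0 else A.V1

/-- `A(X)` is a subarena: `X ⊆ V` and every vertex of `X` has an
outgoing edge inside `X`. -/
def Subarena (A : Arena α) (X : Set α) : Prop :=
  X ⊆ A.V ∧ ∀ v ∈ X, ∃ u ∈ X, (v, u) ∈ A.E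

/-- `A(Y)` is a σ-trap of the pseudo-arena `A(X)`: every vertex of
`Y ∩ V_{1-σ}` has an `E`-successor in `Y`, and every vertex of `Y ∩ V_σ`
has all of its `E`-successors inside `X` lying in `Y`.
A σ-trap of `A` itself is `TrapIn A A.V σ Y`. -/
def TrapIn (A : Arena α) (X : Set α) (σ : Fin 2) (Y : Set α) : Prop :=
  Y ⊆ X ∧
  (∀ v ∈ Y ∩ A.P (1 - σ), ∃ u ∈ Y, (v, u) ∈ A.E) ∧
  (∀ v ∈ Y ∩ A.P σ, ∀ u, (v, u) ∈ A.E → u ∈ X → u ∈ Y)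

/-- A play of the (pseudo-)arena `A(X)`: an infinite `E`-path staying in `X`. -/
def IsPlayIn (A : Arena α) (X : Set α) (ρ : ℕ → α) : Prop :=
  ∀ i, ρ i ∈ X ∧ (ρ i, ρ (i + 1)) ∈ A.E

/-- The set of vertices occurring infinitely often in the play `ρ`. -/
def InfOcc (ρ : ℕ → α) : Set α := {v | {i | ρ i = v}.Infinite}

/-- A strategy for Player σ in the game played on the pseudo-arena `A(X)`:
it maps a history (the finite prefix before the current vertex) and the
current vertex of `V_σ ∩ X` to an `E`-successor inside `X`. -/
structure StrategyIn (A : Arena α) (X : Set α) (σ : Fin 2) where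
  move : List α → α → α
  legal : ∀ h v, v ∈ X ∩ A.P σ → (v, move h v) ∈ A.E ∧ move h v ∈ X

/-- A play is consistent with a strategy for Player σ if every move from a
vertex of `V_σ` follows the strategy. -/
def ConsistentIn {A : Arena α} {X : Set α} {σ : Fin 2} (s : StrategyIn A X σ)
    (ρ : ℕ → α) : Prop :=
  ∀ i, ρ i ∈ A.P σ → ρ (i + 1) = s.move (List.ofFn fun j : Fin i => ρ j) (ρ i)

/-- Player σ wins the game on `A(X)` (with payoff `payoff` describing the
plays won by Player 0) from position `v`. -/
def WinsFrom (A : Arena α) (X : Set α) (payoff : (ℕ → α) → Prop) (σ : Fin 2)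
    (v : α) : Prop :=
  ∃ s : StrategyIn A X σ, ∀ ρ, IsPlayIn A X ρ → ρ 0 = v → ConsistentIn s ρ →
    (if σ = 0 then payoff ρ else ¬ payoff ρ)

/-- `Win_σ` of the game on `A(X)`. -/
def WinSet (A : Arena α) (X : Set α) (payoff : (ℕ → α) → Prop) (σ : Fin 2) :
    Set α :=
  {v ∈ X | WinsFrom A X payoff σ v}

/-- Player σ fully wins the game on `A(X)`. -/
def FullyWins (A : Arena α) (X : Set α) (payoff : (ℕ → α) → Prop)
    (σ : Fin 2) : Prop :=
  ∀ v ∈ X, WinsFrom A X payoff σ v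

/-- The attractor `Attr_σ(T, A(X))`: the least `W ⊇ T` containing every
`u ∈ X ∩ V_σ` with some `E`-successor in `W ∩ X` and every
`u ∈ X ∩ V_{1-σ}` all of whose `E`-successors inside `X` lie in `W`. -/
def AttrIn (A : Arena α) (X : Set α) (σ : Fin 2) (T : Set α) : Set α :=
  ⋂₀ {W | T ⊆ W ∧
    (∀ u ∈ X ∩ A.P σ, (∃ w ∈ W ∩ X, (u, w) ∈ A.E) → u ∈ W) ∧
    (∀ u ∈ X ∩ A.P (1 - σ), (∀ w, (u, w) ∈ A.E → w ∈ X → w ∈ W) → u ∈ W)}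

/-- The Müller winning condition: Player 0 wins the play `ρ` iff `Inf(ρ) ∈ Ω`. -/
def MullerPayoff (Ω : Set (Set α)) : (ℕ → α) → Prop := fun ρ => InfOcc ρ ∈ Ω

/-!
Everything rests on the determinacy of Müller games, proved by Zielonka's induction. Let `L` be
a set of positions that Player `σ` wins when it is the set of positions visited infinitely often,
and let `X ⊆ L` be a subarena on which the opponent wins nowhere. Player `σ` cycles through the
maximal subsets `M` of `L` won by the opponent: he attracts the play to `X \ M`, and while the
play stays outside that attractor (a `σ`-trap contained in `M`) he follows a strategy winning
there, which exists by induction because the opponent cannot win inside a `σ`-trap. Either the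
play leaves every `M` infinitely often, so that its set of infinitely visited positions is won
by `σ`, or it eventually stays in one of these subgames and is won there.

Given determinacy, the complement of Player 1's winning region is a 1-trap fully won by
Player 0, and it contains every other such trap, since Player 0's wins inside a 1-trap lift to
the whole game. So it is `S_max`, and it is Player 0's winning region.
-/

namespace Arena

variable (A : Arena α)

theorem mem_V_of_mem_E {v u : α} (h : (v, u) ∈ A.E) : v ∈ A.V ∧ u ∈ A.V := by
  rcases A.bipartite h with h | h
  · exact ⟨Or.inl h.1, Or.inr h.2⟩
  · exact ⟨Or.inr h.1, Or.inl h.2⟩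

theorem notMem_P_one_sub {v : α} {σ : Fin 2} (h : v ∈ A.P σ) : v ∉ A.P (1 - σ) := by
  rcases Fin.exists_fin_two.1 ⟨σ, rfl⟩ with rfl | rfl <;> simp [Arena.P] at h ⊢
  · exact A.disj.notMem_of_mem_left h
  · exact A.disj.notMem_of_mem_right h

theorem mem_P_one_sub_iff {v : α} (hv : v ∈ A.V) (σ : Fin 2) :
    v ∈ A.P (1 - σ) ↔ v ∉ A.P σ := by
  have hdisj : v ∉ A.V0 ∨ v ∉ A.V1 := by
    by_contra! h
    exact A.disj.le_bot ⟨h.1, h.2⟩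
  rw [Arena.V, Set.mem_union] at hv
  rcases Fin.exists_fin_two.1 ⟨σ, rfl⟩ with rfl | rfl <;> simp [Arena.P] <;> tauto

theorem subarena_V : Subarena A A.V :=
  ⟨subset_rfl, fun v hv => by
    obtain ⟨u, hu⟩ := A.succ v hv
    exact ⟨u, (A.mem_V_of_mem_E hu).2, hu⟩⟩

end Arena

theorem subarena_of_trapIn {A : Arena α} {X Y : Set α} {σ : Fin 2} (hX : Subarena A X)
    (h : TrapIn A X σ Y) : Subarena A Y := by
  refine ⟨h.1.trans hX.1, fun v hv => ?_⟩
  by_cases hP : v ∈ A.P σ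
  · obtain ⟨u, huX, he⟩ := hX.2 v (h.1 hv)
    exact ⟨u, h.2.2 v ⟨hv, hP⟩ u he huX, he⟩
  · exact h.2.1 v ⟨hv, (A.mem_P_one_sub_iff (hX.1 (h.1 hv)) σ).2 hP⟩

section Plays

variable {α : Type}

def WonBy (payoff : (ℕ → α) → Prop) (σ : Fin 2) (ρ : ℕ → α) : Prop :=
  if σ = 0 then payoff ρ else ¬ payoff ρ

def PrefixIndependent (payoff : (ℕ → α) → Prop) : Prop :=
  ∀ ρ n, payoff (fun i => ρ (i + n)) ↔ payoff ρ

theorem PrefixIndependent.wonBy {payoff : (ℕ → α) → Prop} (hpi : PrefixIndependent payoff)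
    (σ : Fin 2) (ρ : ℕ → α) (n : ℕ) :
    WonBy payoff σ (fun i => ρ (i + n)) ↔ WonBy payoff σ ρ := by
  unfold WonBy
  split_ifs <;> simp only [hpi ρ n]

theorem infOcc_shift (ρ : ℕ → α) (n : ℕ) : InfOcc (fun i => ρ (i + n)) = InfOcc ρ := by
  ext v
  simp only [InfOcc, mem_ofPred_eq, Set.infinite_iff_exists_gt]
  constructor
  · intro h a
    obtain ⟨b, hb, hab⟩ := h a
    exact ⟨b + n, hb, by omega⟩
  · intro h a
    obtain ⟨b, hb, hab⟩ := h (a + n)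
    exact ⟨b - n, by rwa [Nat.sub_add_cancel (by omega)], by omega⟩

theorem mullerPayoff_prefixIndependent (Ω : Set (Set α)) :
    PrefixIndependent (MullerPayoff Ω) := fun ρ n => by
  simp only [MullerPayoff, infOcc_shift]

def WinningFor (Ω : Set (Set α)) (σ : Fin 2) (S : Set α) : Prop :=
  if σ = 0 then S ∈ Ω else S ∉ Ω

theorem winningFor_one_sub {Ω : Set (Set α)} {σ : Fin 2} {S : Set α} :
    WinningFor Ω (1 - σ) S ↔ ¬ WinningFor Ω σ S := by
  rcases Fin.exists_fin_two.1 ⟨σ, rfl⟩ with rfl | rfl <;> simp [WinningFor]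

theorem infOcc_subset {ρ : ℕ → α} {S : Set α} (h : ∀ i, ρ i ∈ S) : InfOcc ρ ⊆ S := by
  intro v hv
  obtain ⟨i, rfl⟩ := hv.nonempty
  exact h i

theorem getD_ofFn_of_le (ρ : ℕ → α) {m i : ℕ} (h : m ≤ i) :
    (List.ofFn fun j : Fin i => ρ j).getD m (ρ i) = ρ m := by
  rcases h.lt_or_eq with h | rfl
  · rw [List.getD_eq_getElem _ _ (by simpa using h), List.getElem_ofFn]
  · exact List.getD_eq_default _ _ (by simp)

theorem drop_ofFn_add (ρ : ℕ → α) (i n : ℕ) :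
    (List.ofFn fun j : Fin (i + n) => ρ j).drop n = List.ofFn fun j : Fin i => ρ (j + n) := by
  apply List.ext_getElem (by simp)
  intro k _ _
  simp only [List.getElem_drop, List.getElem_ofFn]
  congr 1
  omega

def playOf (F : List α → α → α) (v : α) (n : ℕ) : α :=
  ((fun p : List α × α => (p.1 ++ [p.2], F p.1 p.2))^[n] ([], v)).2

theorem playOf_succ (F : List α → α → α) (v : α) (n : ℕ) :
    playOf F v (n + 1) = F (List.ofFn fun j : Fin n => playOf F v j) (playOf F v n) := by
  have hhist : ∀ n, ((fun p : List α × α => (p.1 ++ [p.2], F p.1 p.2))^[n] ([], v)).1 =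
      List.ofFn fun j : Fin n => playOf F v j := by
    intro n
    induction n with
    | zero => rfl
    | succ n ih =>
      rw [Function.iterate_succ_apply', ih, List.ofFn_succ_last]
      rfl
  rw [playOf, Function.iterate_succ_apply', hhist]
  rfl

end Plays

theorem inter_infOcc_nonempty {ρ : ℕ → α} {S : Set α} (h : ∀ B, ∃ t ≥ B, ρ t ∈ S) :
    (S ∩ InfOcc ρ).Nonempty := by
  by_contra hempty
  have hcover : {t | ρ t ∈ S} ⊆ ⋃ v ∈ S, {t | ρ t = v} := fun t ht => mem_biUnion ht rfl
  refine Set.infinite_of_forall_exists_gt (fun a => ?_) ((S.toFinite.biUnion fun v hv =>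
    Set.not_infinite.1 fun hinf => hempty ⟨v, hv, hinf⟩).subset hcover)
  obtain ⟨t, ht, hS⟩ := h (a + 1)
  exact ⟨t, hS, by omega⟩

open Classical in
noncomputable def StrategyIn.ofMove {A : Arena α} {X : Set α} (hX : Subarena A X) (σ : Fin 2)
    (f : List α → α → α) : StrategyIn A X σ where
  move h w :=
    if (w, f h w) ∈ A.E ∧ f h w ∈ X then f h w
    else if hw : ∃ u ∈ X, (w, u) ∈ A.E then hw.choose else w
  legal h w hw := by
    split_ifs with hf hsucc
    · exact hf
    · exact ⟨hsucc.choose_spec.2, hsucc.choose_spec.1⟩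
    · exact absurd (hX.2 w hw.1) hsucc

theorem StrategyIn.ofMove_move {A : Arena α} {X : Set α} (hX : Subarena A X) {σ : Fin 2}
    {f : List α → α → α} {h : List α} {w : α} (hf : (w, f h w) ∈ A.E ∧ f h w ∈ X) :
    (StrategyIn.ofMove hX σ f).move h w = f h w := by
  simp [StrategyIn.ofMove, hf]

open Classical in
noncomputable def winMove (A : Arena α) (X : Set α) (payoff : (ℕ → α) → Prop) (σ : Fin 2)
    (u : α) : List α → α → α :=
  if hu : WinsFrom A X payoff σ u then hu.choose.move else fun _ w => w

section Strategies

variable {A : Arena α} {X : Set α} {payoff : (ℕ → α) → Prop} {σ : Fin 2}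

theorem winMove_spec {u : α} (hu : WinsFrom A X payoff σ u) :
    ∃ s : StrategyIn A X σ, s.move = winMove A X payoff σ u ∧
      ∀ ρ, IsPlayIn A X ρ → ρ 0 = u → ConsistentIn s ρ → WonBy payoff σ ρ :=
  ⟨hu.choose, by rw [winMove, dif_pos hu], hu.choose_spec⟩

theorem winMove_legal {u w : α} (hu : WinsFrom A X payoff σ u) (hw : w ∈ X ∩ A.P σ)
    (h : List α) :
    (w, winMove A X payoff σ u h w) ∈ A.E ∧ winMove A X payoff σ u h w ∈ X := by
  obtain ⟨s, hs, -⟩ := winMove_spec hu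
  rw [← hs]
  exact s.legal h w hw

theorem wonBy_of_follows_winMove (hpi : PrefixIndependent payoff) {ρ : ℕ → α} {n : ℕ}
    (hρ : ∀ i, n ≤ i → ρ i ∈ X ∧ (ρ i, ρ (i + 1)) ∈ A.E) (hu : WinsFrom A X payoff σ (ρ n))
    (hfollow : ∀ i, n ≤ i → ρ i ∈ A.P σ →
      ρ (i + 1) = winMove A X payoff σ (ρ n) ((List.ofFn fun j : Fin i => ρ j).drop n) (ρ i)) :
    WonBy payoff σ ρ := by
  obtain ⟨s, hs, hwin⟩ := winMove_spec hu
  refine (hpi.wonBy σ ρ n).1 (hwin _ (fun i => ?_) (by simp) fun i hP => ?_)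
  · simpa only [Nat.add_right_comm] using hρ (i + n) (by omega)
  · rw [hs, ← drop_ofFn_add, Nat.add_right_comm]
    exact hfollow (i + n) (by omega) hP

end Strategies

section Traps

variable {A : Arena α} {X : Set α} {payoff : (ℕ → α) → Prop} {σ : Fin 2}

theorem winsFrom_of_trapIn {Y : Set α} (hX : Subarena A X) (hY : TrapIn A X (1 - σ) Y) {v : α}
    (hv : v ∈ Y) (hwin : WinsFrom A Y payoff σ v) : WinsFrom A X payoff σ v := by
  obtain ⟨s, hs⟩ := hwin
  refine ⟨StrategyIn.ofMove hX σ s.move, fun ρ hρ h0 hcons => ?_⟩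
  have hfollow : ∀ t, ρ t ∈ Y → ρ t ∈ A.P σ →
      ρ (t + 1) = s.move (List.ofFn fun j : Fin t => ρ j) (ρ t) := fun t ht hP => by
    have hlegal := s.legal (List.ofFn fun j : Fin t => ρ j) _ ⟨ht, hP⟩
    rw [hcons t hP, StrategyIn.ofMove_move hX ⟨hlegal.1, hY.1 hlegal.2⟩]
  have hstay : ∀ t, ρ t ∈ Y := by
    intro t
    induction t with
    | zero => rwa [h0]
    | succ t ih =>
      by_cases hP : ρ t ∈ A.P σ
      · rw [hfollow t ih hP]
        exact (s.legal _ _ ⟨ih, hP⟩).2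
      · refine hY.2.2 _ ⟨ih, ?_⟩ _ (hρ t).2 (hρ (t + 1)).1
        exact (A.mem_P_one_sub_iff (hX.1 (hY.1 ih)) σ).2 hP
  exact hs ρ (fun t => ⟨hstay t, (hρ t).2⟩) h0 fun t hP => hfollow t (hstay t) hP

theorem winsFrom_of_forall_succ (hpi : PrefixIndependent payoff) (hX : Subarena A X) {v f₀ : α}
    (hf₀ : v ∈ A.P σ → (v, f₀) ∈ A.E ∧ f₀ ∈ X)
    (hwin : ∀ u, (v, u) ∈ A.E → u ∈ X → (v ∈ A.P σ → u = f₀) → WinsFrom A X payoff σ u) :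
    WinsFrom A X payoff σ v := by
  refine ⟨StrategyIn.ofMove hX σ fun h w =>
    if h.length = 0 then f₀ else winMove A X payoff σ (h.getD 1 w) (h.drop 1) w,
    fun ρ hρ h0 hcons => ?_⟩
  have hu : WinsFrom A X payoff σ (ρ 1) := by
    refine hwin (ρ 1) (h0 ▸ (hρ 0).2) (hρ 1).1 fun hP => ?_
    rw [hcons 0 (h0 ▸ hP), h0, StrategyIn.ofMove_move] <;> simp [hf₀ hP]
  refine wonBy_of_follows_winMove hpi (fun i _ => hρ i) hu fun i hi hP => ?_
  have hlen : (List.ofFn fun j : Fin i => ρ j).length ≠ 0 := by simp; omega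
  rw [hcons i hP, StrategyIn.ofMove_move] <;> simp only [if_neg hlen, getD_ofFn_of_le ρ hi]
  exact winMove_legal hu ⟨(hρ i).1, hP⟩ _

theorem winSet_compl_trapIn (hpi : PrefixIndependent payoff) (hX : Subarena A X) (σ : Fin 2) :
    TrapIn A X σ (X \ WinSet A X payoff σ) := by
  refine ⟨sdiff_subset, fun v ⟨hvY, hvP⟩ => ?_, fun v ⟨hvY, hvP⟩ u he huX => ?_⟩
  · by_contra! hstuck
    refine hvY.2 ⟨hvY.1, winsFrom_of_forall_succ hpi hX (f₀ := v)
      (fun hP => absurd hP ((A.mem_P_one_sub_iff (hX.1 hvY.1) σ).1 hvP)) fun u he huX _ => ?_⟩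
    by_contra hu
    exact hstuck u ⟨huX, fun h => hu h.2⟩ he
  · by_contra hu
    refine hvY.2 ⟨hvY.1, winsFrom_of_forall_succ hpi hX (fun _ => ⟨he, huX⟩)
      fun u' _ _ hu' => ?_⟩
    rw [hu' hvP]
    by_contra hu''
    exact hu ⟨huX, fun h => hu'' h.2⟩

theorem winSet_compl_winSet_eq_empty (hpi : PrefixIndependent payoff) (hX : Subarena A X)
    (σ : Fin 2) : WinSet A (X \ WinSet A X payoff σ) payoff σ = ∅ := by
  set Y := X \ WinSet A X payoff σ
  refine eq_empty_iff_forall_notMem.2 fun v ⟨hvY, s, hs⟩ => hvY.2 ⟨hvY.1, ?_⟩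
  classical
  -- Follow `s` while the play stays in `Y`; from the first exit on, play to win from there.
  refine ⟨StrategyIn.ofMove hX σ fun h w =>
    if hexit : ∃ m, m ≤ h.length ∧ h.getD m w ∉ Y then
      winMove A X payoff σ (h.getD (Nat.find hexit) w) (h.drop (Nat.find hexit)) w
    else s.move h w, fun ρ hρ h0 hcons => ?_⟩
  by_cases hstay : ∀ t, ρ t ∈ Y
  · refine hs ρ (fun t => ⟨hstay t, (hρ t).2⟩) h0 fun t hP => ?_
    have hnexit : ¬ ∃ m, m ≤ (List.ofFn fun j : Fin t => ρ j).length ∧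
        (List.ofFn fun j : Fin t => ρ j).getD m (ρ t) ∉ Y := by
      rintro ⟨m, hm, hmY⟩
      rw [List.length_ofFn] at hm
      exact hmY (getD_ofFn_of_le ρ hm ▸ hstay m)
    have hlegal := s.legal (List.ofFn fun j : Fin t => ρ j) _ ⟨hstay t, hP⟩
    rw [hcons t hP, StrategyIn.ofMove_move] <;> simp only [dif_neg hnexit]
    exact ⟨hlegal.1, hlegal.2.1⟩
  simp only [not_forall] at hstay
  set n := Nat.find hstay
  have hn : ρ n ∈ WinSet A X payoff σ := by
    by_contra h
    exact Nat.find_spec hstay ⟨(hρ n).1, h⟩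
  refine wonBy_of_follows_winMove hpi (fun i _ => hρ i) hn.2 fun i hi hP => ?_
  have hexit_n : n ≤ (List.ofFn fun j : Fin i => ρ j).length ∧
      (List.ofFn fun j : Fin i => ρ j).getD n (ρ i) ∉ Y :=
    ⟨by simpa using hi, by rw [getD_ofFn_of_le ρ hi]; exact Nat.find_spec hstay⟩
  have hexit : ∃ m, m ≤ (List.ofFn fun j : Fin i => ρ j).length ∧
      (List.ofFn fun j : Fin i => ρ j).getD m (ρ i) ∉ Y := ⟨n, hexit_n⟩
  have hfind : Nat.find hexit = n := by
    refine (Nat.find_eq_iff hexit).2 ⟨hexit_n, fun m hm ⟨_, hmY⟩ => ?_⟩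
    rw [getD_ofFn_of_le ρ (by omega)] at hmY
    exact Nat.find_min hstay hm hmY
  rw [hcons i hP, StrategyIn.ofMove_move] <;>
    simp only [dif_pos hexit, hfind, getD_ofFn_of_le ρ hi]
  exact winMove_legal hn.2 ⟨(hρ i).1, hP⟩ _

theorem winSet_disjoint (hX : Subarena A X) :
    Disjoint (WinSet A X payoff 0) (WinSet A X payoff 1) := by
  refine disjoint_left.2 fun v ⟨hv, s₀, hs₀⟩ ⟨_, s₁, hs₁⟩ => ?_
  classical
  set ρ := playOf (fun h w => if w ∈ A.P 0 then s₀.move h w else s₁.move h w) v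
  have hnext : ∀ t, ρ (t + 1) = if ρ t ∈ A.P 0
      then s₀.move (List.ofFn fun j : Fin t => ρ j) (ρ t)
      else s₁.move (List.ofFn fun j : Fin t => ρ j) (ρ t) := fun t => playOf_succ _ _ t
  have hP1 : ∀ t, ρ t ∈ X → ρ t ∈ A.P 1 → ρ t ∉ A.P 0 := fun t ht =>
    (A.mem_P_one_sub_iff (hX.1 ht) 0).1
  have hstep : ∀ t, ρ t ∈ X → (ρ t, ρ (t + 1)) ∈ A.E ∧ ρ (t + 1) ∈ X := by
    intro t ht
    rw [hnext t]
    split_ifs with hP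
    · exact s₀.legal _ _ ⟨ht, hP⟩
    · exact s₁.legal _ _ ⟨ht, (A.mem_P_one_sub_iff (hX.1 ht) 0).2 hP⟩
  have hmem : ∀ t, ρ t ∈ X := fun t => by
    induction t with
    | zero => exact hv
    | succ t ih => exact (hstep t ih).2
  have hplay : IsPlayIn A X ρ := fun t => ⟨hmem t, (hstep t (hmem t)).1⟩
  have hwin₀ := hs₀ ρ hplay rfl fun t hP => by rw [hnext t, if_pos hP]
  have hwin₁ := hs₁ ρ hplay rfl fun t hP => by rw [hnext t, if_neg (hP1 t (hmem t) hP)]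
  simp only [if_true, Fin.one_eq_zero_iff] at hwin₀ hwin₁
  exact hwin₁ hwin₀

/-- On the complement of the opponent's winning region `σ` wins by `hL`, and these wins lift to
`X` because that complement is a trap for the opponent. -/
theorem winsFrom_or_winsFrom_one_sub (hpi : PrefixIndependent payoff) {L : Set α}
    (hL : ∀ Y ⊆ L, Subarena A Y → WinSet A Y payoff (1 - σ) = ∅ → FullyWins A Y payoff σ)
    (hXL : X ⊆ L) (hX : Subarena A X) {v : α} (hv : v ∈ X) :
    WinsFrom A X payoff σ v ∨ WinsFrom A X payoff (1 - σ) v := by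
  refine or_iff_not_imp_right.2 fun hv' => ?_
  have htrap := winSet_compl_trapIn hpi hX (1 - σ)
  have hvY : v ∈ X \ WinSet A X payoff (1 - σ) := ⟨hv, fun h => hv' h.2⟩
  refine winsFrom_of_trapIn hX htrap hvY (hL _ (sdiff_subset.trans hXL) ?_ ?_ v hvY)
  · exact subarena_of_trapIn hX htrap
  · exact winSet_compl_winSet_eq_empty hpi hX (1 - σ)

end Traps

def attrLevel (A : Arena α) (X : Set α) (σ : Fin 2) (T : Set α) : ℕ → Set α
  | 0 => T
  | n + 1 => attrLevel A X σ T n ∪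
      {u | u ∈ X ∩ A.P σ ∧ ∃ w ∈ attrLevel A X σ T n ∩ X, (u, w) ∈ A.E} ∪
      {u | u ∈ X ∩ A.P (1 - σ) ∧ ∀ w, (u, w) ∈ A.E → w ∈ X → w ∈ attrLevel A X σ T n}

section Attractor

variable {A : Arena α} {X T : Set α} {σ : Fin 2}

theorem attrLevel_mono : Monotone (attrLevel A X σ T) :=
  monotone_nat_of_le_succ fun _ => subset_union_left.trans subset_union_left

theorem subset_attrIn : T ⊆ AttrIn A X σ T :=
  subset_sInter fun _ hW => hW.1

theorem mem_attrIn_of_mem_P {u : α} (hu : u ∈ X ∩ A.P σ)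
    (h : ∃ w ∈ AttrIn A X σ T ∩ X, (u, w) ∈ A.E) : u ∈ AttrIn A X σ T := by
  obtain ⟨w, hw, he⟩ := h
  exact mem_sInter.2 fun W hW => hW.2.1 u hu ⟨w, ⟨mem_sInter.1 hw.1 W hW, hw.2⟩, he⟩

theorem mem_attrIn_of_mem_P_one_sub {u : α} (hu : u ∈ X ∩ A.P (1 - σ))
    (h : ∀ w, (u, w) ∈ A.E → w ∈ X → w ∈ AttrIn A X σ T) : u ∈ AttrIn A X σ T :=
  mem_sInter.2 fun W hW => hW.2.2 u hu fun w he hw => mem_sInter.1 (h w he hw) W hW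

theorem attrIn_eq_iUnion_attrLevel : AttrIn A X σ T = ⋃ n, attrLevel A X σ T n := by
  refine subset_antisymm (sInter_subset_of_mem ⟨subset_iUnion (attrLevel A X σ T) 0, ?_, ?_⟩)
    (iUnion_subset fun n => ?_)
  · rintro u hu ⟨w, ⟨hw, hwX⟩, he⟩
    obtain ⟨n, hn⟩ := mem_iUnion.1 hw
    exact mem_iUnion.2 ⟨n + 1, Or.inl (Or.inr ⟨hu, w, ⟨hn, hwX⟩, he⟩)⟩
  · intro u hu h
    classical
    -- finitely many successors, hence a common level
    obtain ⟨n, hn⟩ := (attrLevel_mono (A := A) (X := X) (σ := σ) (T := T)).directed_le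
      |>.exists_mem_subset_of_finset_subset_biUnion
        (s := {w | (u, w) ∈ A.E ∧ w ∈ X}.toFinset) fun w hw => by
          simp only [coe_toFinset, mem_ofPred_eq] at hw
          exact h w hw.1 hw.2
    exact mem_iUnion.2 ⟨n + 1, Or.inr ⟨hu, fun w he hw => hn (by simp [he, hw])⟩⟩
  · induction n with
    | zero => exact subset_attrIn
    | succ n ih =>
      rintro u ((hu | ⟨hu, w, ⟨hw, hwX⟩, he⟩) | ⟨hu, h⟩)
      · exact ih hu
      · exact mem_attrIn_of_mem_P hu ⟨w, ⟨ih hw, hwX⟩, he⟩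
      · exact mem_attrIn_of_mem_P_one_sub hu fun w he hw => ih (h w he hw)

theorem compl_attrIn_trapIn : TrapIn A X σ (X \ AttrIn A X σ T) := by
  refine ⟨sdiff_subset, fun u ⟨hu, hP⟩ => ?_, fun u ⟨hu, hP⟩ w he hwX => ?_⟩
  · by_contra! h
    exact hu.2 (mem_attrIn_of_mem_P_one_sub ⟨hu.1, hP⟩
      fun w he hw => by_contra fun hw' => h w ⟨hw, hw'⟩ he)
  · exact ⟨hwX, fun hw => hu.2 (mem_attrIn_of_mem_P ⟨hu.1, hP⟩ ⟨w, ⟨hw, hwX⟩, he⟩)⟩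

theorem exists_ge_mem_of_mem_attrLevel {ρ : ℕ → α} (hρ : IsPlayIn A X ρ) {t₀ : ℕ}
    (hmove : ∀ t ≥ t₀, ∀ k, ρ t ∈ attrLevel A X σ T (k + 1) → ρ t ∉ T → ρ t ∈ A.P σ →
      ρ (t + 1) ∈ attrLevel A X σ T k) (k : ℕ) :
    ∀ t ≥ t₀, ρ t ∈ attrLevel A X σ T k → ∃ t' ≥ t, ρ t' ∈ T := by
  induction k with
  | zero => exact fun t _ hT => ⟨t, le_rfl, hT⟩
  | succ k ih =>
    intro t ht hk
    by_cases hT : ρ t ∈ T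
    · exact ⟨t, le_rfl, hT⟩
    have hnext : ρ t ∈ attrLevel A X σ T k ∨ ρ (t + 1) ∈ attrLevel A X σ T k := by
      rcases id hk with (hk' | ⟨⟨-, hP⟩, -⟩) | ⟨-, hall⟩
      · exact Or.inl hk'
      · exact Or.inr (hmove t ht k hk hT hP)
      · exact Or.inr (hall _ (hρ t).2 (hρ (t + 1)).1)
    rcases hnext with hnow | hnext
    · exact ih t ht hnow
    · obtain ⟨t', ht', hT'⟩ := ih (t + 1) (by omega) hnext
      exact ⟨t', by omega, hT'⟩

open Classical in
noncomputable def attrMove (A : Arena α) (X : Set α) (σ : Fin 2) (T : Set α) (w : α) : α :=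
  if h : ∃ u, (w, u) ∈ A.E ∧ u ∈ X ∧ ∃ k, u ∈ attrLevel A X σ T k ∧ w ∉ attrLevel A X σ T k
  then h.choose else w

theorem attrMove_spec {w : α} {k : ℕ} (hw : w ∈ attrLevel A X σ T (k + 1)) (hT : w ∉ T)
    (hP : w ∈ A.P σ) :
    (w, attrMove A X σ T w) ∈ A.E ∧ attrMove A X σ T w ∈ X ∧
      attrMove A X σ T w ∈ attrLevel A X σ T k := by
  classical
  have hex : ∃ n, w ∈ attrLevel A X σ T n := ⟨k + 1, hw⟩
  have hmin := Nat.find_spec hex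
  obtain ⟨r, hr⟩ : ∃ r, Nat.find hex = r + 1 :=
    Nat.exists_eq_add_one_of_ne_zero fun h => hT (by rw [h] at hmin; exact hmin)
  have hr' : w ∉ attrLevel A X σ T r := Nat.find_min hex (by omega)
  have h : ∃ u, (w, u) ∈ A.E ∧ u ∈ X ∧ ∃ k, u ∈ attrLevel A X σ T k ∧ w ∉ attrLevel A X σ T k := by
    rw [hr] at hmin
    rcases hmin with (hw' | ⟨-, u, ⟨hu, huX⟩, he⟩) | ⟨⟨_, hP'⟩, -⟩
    · exact absurd hw' hr'
    · exact ⟨u, he, huX, r, hu, hr'⟩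
    · exact absurd hP' (A.notMem_P_one_sub hP)
  rw [attrMove, dif_pos h]
  obtain ⟨he, huX, k', hu, hwk'⟩ := h.choose_spec
  refine ⟨he, huX, attrLevel_mono ?_ hu⟩
  by_contra! hk
  exact hwk' (attrLevel_mono hk hw)

end Attractor

theorem exists_eq_and_succ_eq_of_unbounded {f : ℕ → ℕ}
    (hf : ∀ t, f (t + 1) = f t ∨ f (t + 1) = f t + 1) (hub : ∀ n, ∃ t, n ≤ f t) {B n : ℕ}
    (hB : f B ≤ n) : ∃ t ≥ B, f t = n ∧ f (t + 1) = n + 1 := by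
  have hmono : Monotone f := monotone_nat_of_le_succ fun t => by rcases hf t with h | h <;> omega
  suffices h : ∀ d, n < f (B + d) → ∃ t ≥ B, f t = n ∧ f (t + 1) = n + 1 by
    obtain ⟨t, ht⟩ := hub (n + 1)
    exact h t (by have := hmono (show t ≤ B + t by omega); omega)
  intro d
  induction d with
  | zero => intro h; rw [Nat.add_zero] at h; omega
  | succ d ih =>
    intro h
    rw [← Nat.add_assoc] at h
    by_cases hd : n < f (B + d)
    · exact ih hd
    · rcases hf (B + d) with h' | h' <;> refine ⟨B + d, by omega, ?_⟩ <;> omega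

theorem exists_forall_ge_eq_of_bounded {f : ℕ → ℕ} (hf : Monotone f) {B : ℕ}
    (hB : ∀ t, f t < B) : ∃ N, ∀ t ≥ N, f t = f N := by
  obtain ⟨_, ⟨N, rfl⟩, hmax⟩ := Set.exists_max_image (range f) id
    ((finite_Iio B).subset (range_subset_iff.2 hB)) (range_nonempty f)
  exact ⟨N, fun t ht => le_antisymm (hmax _ ⟨t, rfl⟩) (hf ht)⟩

namespace Zielonka

variable (A : Arena α) (X : Set α) (σ : Fin 2) (cl : List (Set α))

/-- The children are visited cyclically; `∅` if there are none. -/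
def child (i : ℕ) : Set α := cl.getD (i % cl.length) ∅

def target (i : ℕ) : Set α := X \ child cl i

def sub (i : ℕ) : Set α := X \ AttrIn A X σ (target X cl i)

/-- The memory of `σ`'s strategy: `idx` is the index of the current child, advanced whenever
the play reaches its target; `entry` is the time at which the play entered the current subgame
`sub idx` (`none` while it is in the attractor); `time` counts the positions read so far. -/
structure State where
  idx : ℕ
  entry : Option ℕ
  time : ℕ

open Classical in
noncomputable def step (s : State) (v : α) : State :=
  let i := if v ∈ target X cl s.idx then s.idx + 1 else s.idx
  { idx := i
    entry := if v ∈ sub A X σ cl i then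
      some (if i = s.idx then s.entry.getD s.time else s.time) else none
    time := s.time + 1 }

noncomputable def run (h : List α) : State := h.foldl (step A X σ cl) ⟨0, none, 0⟩

noncomputable def stateAt (ρ : ℕ → α) : ℕ → State
  | 0 => step A X σ cl ⟨0, none, 0⟩ (ρ 0)
  | t + 1 => step A X σ cl (stateAt ρ t) (ρ (t + 1))

noncomputable def strategy (hX : Subarena A X) (Ω : Set (Set α)) : StrategyIn A X σ :=
  StrategyIn.ofMove hX σ fun h w =>
    let s := step A X σ cl (run A X σ cl h) w
    s.entry.elim (attrMove A X σ (target X cl s.idx) w) fun m =>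
      winMove A (sub A X σ cl s.idx) (MullerPayoff Ω) σ (h.getD m w) (h.drop m) w

variable {A X σ cl}

theorem sub_trapIn (i : ℕ) : TrapIn A X σ (sub A X σ cl i) := compl_attrIn_trapIn

theorem sub_subset_child (i : ℕ) : sub A X σ cl i ⊆ child cl i := fun _ hv =>
  by_contra fun h => hv.2 (subset_attrIn ⟨hv.1, h⟩)

theorem child_mem {i : ℕ} {v : α} (hv : v ∈ sub A X σ cl i) : child cl i ∈ cl := by
  have hlen : i % cl.length < cl.length := by
    by_contra! h
    have := sub_subset_child i hv
    rwa [child, List.getD_eq_default _ _ h] at this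
  rw [child, List.getD_eq_getElem _ _ hlen]
  exact List.getElem_mem hlen

theorem step_entry_eq_none_iff (s : State) (v : α) :
    (step A X σ cl s v).entry = none ↔ v ∉ sub A X σ cl (step A X σ cl s v).idx := by
  simp only [step]
  split_ifs <;> simp_all

theorem step_entry_eq_some {s : State} {v : α} {m : ℕ} (h : (step A X σ cl s v).entry = some m) :
    m = s.time ∨ (step A X σ cl s v).idx = s.idx ∧ s.entry = some m := by
  simp only [step] at h ⊢
  split_ifs at h ⊢ <;> cases hs : s.entry <;> simp_all

theorem step_entry_of_mem_sub {s : State} {v : α} {m : ℕ} (hT : v ∉ target X cl s.idx)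
    (hsub : v ∈ sub A X σ cl s.idx) (hm : s.entry = some m) :
    (step A X σ cl s v).entry = some m := by
  simp [step, hT, hsub, hm]

theorem step_run_ofFn (ρ : ℕ → α) (t : ℕ) :
    step A X σ cl (run A X σ cl (List.ofFn fun j : Fin t => ρ j)) (ρ t) = stateAt A X σ cl ρ t := by
  induction t with
  | zero => rfl
  | succ t ih =>
    rw [run, List.ofFn_succ_last, List.foldl_append]
    simp only [Fin.val_castSucc, Fin.val_last, List.foldl_cons, List.foldl_nil]
    rw [← run, ih]
    rfl

open Classical in
theorem stateAt_succ_idx (ρ : ℕ → α) (t : ℕ) : (stateAt A X σ cl ρ (t + 1)).idx =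
    if ρ (t + 1) ∈ target X cl (stateAt A X σ cl ρ t).idx
    then (stateAt A X σ cl ρ t).idx + 1 else (stateAt A X σ cl ρ t).idx := rfl

theorem stateAt_idx_mono (ρ : ℕ → α) : Monotone fun t => (stateAt A X σ cl ρ t).idx :=
  monotone_nat_of_le_succ fun t => by rw [stateAt_succ_idx]; split_ifs <;> omega

theorem stateAt_time (ρ : ℕ → α) (t : ℕ) : (stateAt A X σ cl ρ t).time = t + 1 := by
  induction t with
  | zero => rfl
  | succ t ih => exact congrArg (· + 1) ih

theorem stateAt_entry_eq_none_iff {ρ : ℕ → α} {t : ℕ} :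
    (stateAt A X σ cl ρ t).entry = none ↔ ρ t ∉ sub A X σ cl (stateAt A X σ cl ρ t).idx := by
  cases t <;> exact step_entry_eq_none_iff _ _

theorem stateAt_entry_segment {ρ : ℕ → α} {t m : ℕ} (h : (stateAt A X σ cl ρ t).entry = some m) :
    m ≤ t ∧ ∀ j, m ≤ j → j ≤ t →
      (stateAt A X σ cl ρ j).idx = (stateAt A X σ cl ρ t).idx ∧
        (stateAt A X σ cl ρ j).entry = some m := by
  induction t with
  | zero =>
    rcases step_entry_eq_some h with rfl | ⟨-, h'⟩
    · refine ⟨le_rfl, fun j hj hj' => ?_⟩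
      obtain rfl : j = 0 := by omega
      exact ⟨rfl, h⟩
    · cases h'
  | succ t ih =>
    rcases step_entry_eq_some h with rfl | ⟨hidx, h'⟩
    · rw [stateAt_time] at h ⊢
      refine ⟨le_rfl, fun j hj hj' => ?_⟩
      obtain rfl : j = t + 1 := by omega
      exact ⟨rfl, h⟩
    · obtain ⟨hmt, hseg⟩ := ih h'
      refine ⟨by omega, fun j hj hj' => ?_⟩
      rcases hj'.lt_or_eq with hj' | rfl
      · rw [show (stateAt A X σ cl ρ (t + 1)).idx = _ from hidx]
        exact hseg j hj (by omega)
      · exact ⟨rfl, h⟩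

section Play

variable {Ω : Set (Set α)} {hX : Subarena A X} {ρ : ℕ → α}

theorem next_mem_attrLevel (hcons : ConsistentIn (strategy A X σ cl hX Ω) ρ) {t k : ℕ}
    (hP : ρ t ∈ A.P σ) (hnone : (stateAt A X σ cl ρ t).entry = none)
    (hk : ρ t ∈ attrLevel A X σ (target X cl (stateAt A X σ cl ρ t).idx) (k + 1))
    (hT : ρ t ∉ target X cl (stateAt A X σ cl ρ t).idx) :
    ρ (t + 1) ∈ attrLevel A X σ (target X cl (stateAt A X σ cl ρ t).idx) k := by
  have hspec := attrMove_spec hk hT hP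
  rw [hcons t hP, strategy, StrategyIn.ofMove_move] <;>
    simp only [step_run_ofFn, hnone, Option.elim_none]
  exacts [hspec.2.2, ⟨hspec.1, hspec.2.1⟩]

theorem next_eq_winMove (hsub : ∀ i, FullyWins A (sub A X σ cl i) (MullerPayoff Ω) σ)
    (hcons : ConsistentIn (strategy A X σ cl hX Ω) ρ) {t m : ℕ} (hP : ρ t ∈ A.P σ)
    (hm : (stateAt A X σ cl ρ t).entry = some m) :
    ρ (t + 1) = winMove A (sub A X σ cl (stateAt A X σ cl ρ t).idx) (MullerPayoff Ω) σ (ρ m)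
      ((List.ofFn fun j : Fin t => ρ j).drop m) (ρ t) := by
  obtain ⟨hmt, hseg⟩ := stateAt_entry_segment hm
  have hmem : ∀ j, m ≤ j → j ≤ t → ρ j ∈ sub A X σ cl (stateAt A X σ cl ρ t).idx := by
    intro j hj hj'
    obtain ⟨hidx, hentry⟩ := hseg j hj hj'
    rw [← hidx]
    exact not_not.1 fun h => by simp [stateAt_entry_eq_none_iff.2 h] at hentry
  have hlegal := winMove_legal (hsub _ _ (hmem m le_rfl hmt)) ⟨hmem t hmt le_rfl, hP⟩
    ((List.ofFn fun j : Fin t => ρ j).drop m)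
  rw [hcons t hP, strategy, StrategyIn.ofMove_move] <;>
    simp only [step_run_ofFn, hm, Option.elim_some, getD_ofFn_of_le ρ hmt]
  exact ⟨hlegal.1, hlegal.2.1⟩

/-- If the play hits every target infinitely often, it leaves every child infinitely often. -/
theorem wonBy_of_unbounded (hρ : IsPlayIn A X ρ)
    (hchildren : ∀ S ⊆ X, (∀ M ∈ cl, ¬ S ⊆ M) → WinningFor Ω σ S)
    (hub : ∀ n, ∃ t, n ≤ (stateAt A X σ cl ρ t).idx) : WonBy (MullerPayoff Ω) σ ρ := by
  refine hchildren _ (infOcc_subset fun t => (hρ t).1) fun M hM hInf => ?_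
  obtain ⟨j, hj, rfl⟩ := List.getElem_of_mem hM
  have hleave : ∀ B, ∃ t ≥ B, ρ t ∈ X \ cl[j] := by
    intro B
    have hpos : (stateAt A X σ cl ρ B).idx + 1 ≤ cl.length * ((stateAt A X σ cl ρ B).idx + 1) :=
      Nat.le_mul_of_pos_left _ (by omega)
    obtain ⟨t, htB, htn, hsucc⟩ := exists_eq_and_succ_eq_of_unbounded
      (f := fun t => (stateAt A X σ cl ρ t).idx) (fun t => by
        simp only [stateAt_succ_idx]; split_ifs <;> simp) hub
      (B := B) (n := j + cl.length * ((stateAt A X σ cl ρ B).idx + 1)) (by omega)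
    refine ⟨t + 1, by omega, ?_⟩
    have hT : ρ (t + 1) ∈ target X cl (stateAt A X σ cl ρ t).idx := by
      by_contra hT
      simp only [stateAt_succ_idx, if_neg hT] at hsucc
      omega
    rwa [htn, target, child, Nat.add_mul_mod_self_left, Nat.mod_eq_of_lt hj,
      List.getD_eq_getElem] at hT
  obtain ⟨v, hv, hvInf⟩ := inter_infOcc_nonempty hleave
  exact hv.2 (hInf hvInf)

theorem notMem_target_of_idx_eventually_const {N : ℕ}
    (hN : ∀ t ≥ N, (stateAt A X σ cl ρ t).idx = (stateAt A X σ cl ρ N).idx) {t : ℕ} (ht : N < t) :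
    ρ t ∉ target X cl (stateAt A X σ cl ρ N).idx := by
  intro hT
  obtain ⟨t, rfl⟩ : ∃ t', t = t' + 1 := ⟨t - 1, by omega⟩
  have h := hN (t + 1) (by omega)
  rw [stateAt_succ_idx, hN t (by omega), if_pos hT] at h
  omega

/-- Once the index stops growing, the play never reaches the target again, so it cannot enter
the attractor, from which `σ` would force it there. -/
theorem mem_sub_of_idx_eventually_const (hρ : IsPlayIn A X ρ)
    (hcons : ConsistentIn (strategy A X σ cl hX Ω) ρ) {N : ℕ}
    (hN : ∀ t ≥ N, (stateAt A X σ cl ρ t).idx = (stateAt A X σ cl ρ N).idx) {t : ℕ} (ht : N < t) :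
    ρ t ∈ sub A X σ cl (stateAt A X σ cl ρ N).idx := by
  set i := (stateAt A X σ cl ρ N).idx
  refine ⟨(hρ t).1, fun hA => ?_⟩
  rw [attrIn_eq_iUnion_attrLevel] at hA
  obtain ⟨k, hk⟩ := mem_iUnion.1 hA
  have hmove : ∀ t' ≥ t, ∀ k, ρ t' ∈ attrLevel A X σ (target X cl i) (k + 1) →
      ρ t' ∉ target X cl i → ρ t' ∈ A.P σ → ρ (t' + 1) ∈ attrLevel A X σ (target X cl i) k := by
    intro t' ht' k hk hT hP
    rw [← hN t' (by omega)] at hk hT ⊢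
    refine next_mem_attrLevel hcons hP (stateAt_entry_eq_none_iff.2 fun h => h.2 ?_) hk hT
    rw [attrIn_eq_iUnion_attrLevel]
    exact mem_iUnion.2 ⟨k + 1, hk⟩
  obtain ⟨t', ht', hT'⟩ := exists_ge_mem_of_mem_attrLevel hρ hmove k t le_rfl hk
  exact notMem_target_of_idx_eventually_const hN (by omega) hT'

theorem exists_entry_of_idx_eventually_const (hρ : IsPlayIn A X ρ)
    (hcons : ConsistentIn (strategy A X σ cl hX Ω) ρ) {N : ℕ}
    (hN : ∀ t ≥ N, (stateAt A X σ cl ρ t).idx = (stateAt A X σ cl ρ N).idx) :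
    ∃ m, ∀ t ≥ m, (stateAt A X σ cl ρ t).entry = some m ∧
      (stateAt A X σ cl ρ t).idx = (stateAt A X σ cl ρ N).idx := by
  have hsub := fun t (ht : N < t) => mem_sub_of_idx_eventually_const hρ hcons hN ht
  obtain ⟨m, hm⟩ := Option.ne_none_iff_exists'.1 fun h =>
    stateAt_entry_eq_none_iff.1 h (hN (N + 1) (by omega) ▸ hsub (N + 1) (by omega))
  have hpersist : ∀ t ≥ N + 1, (stateAt A X σ cl ρ t).entry = some m := by
    intro t ht
    induction t, ht using Nat.le_induction with
    | base => exact hm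
    | succ t ht ih =>
      have hidx := hN t (by omega)
      exact step_entry_of_mem_sub (hidx ▸ notMem_target_of_idx_eventually_const hN (by omega))
        (hidx ▸ hsub (t + 1) (by omega)) ih
  refine ⟨m, fun t ht => ?_⟩
  rcases le_or_gt t (N + 1) with h | h
  · obtain ⟨hidx, hentry⟩ := (stateAt_entry_segment hm).2 t ht h
    exact ⟨hentry, hidx.trans (hN (N + 1) (by omega))⟩
  · exact ⟨hpersist t h.le, hN t (by omega)⟩

theorem wonBy_of_bounded (hsub : ∀ i, FullyWins A (sub A X σ cl i) (MullerPayoff Ω) σ)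
    (hρ : IsPlayIn A X ρ) (hcons : ConsistentIn (strategy A X σ cl hX Ω) ρ) {B : ℕ}
    (hB : ∀ t, (stateAt A X σ cl ρ t).idx < B) : WonBy (MullerPayoff Ω) σ ρ := by
  obtain ⟨N, hN⟩ := exists_forall_ge_eq_of_bounded (stateAt_idx_mono ρ) hB
  obtain ⟨m, hm⟩ := exists_entry_of_idx_eventually_const hρ hcons hN
  have hmem : ∀ t ≥ m, ρ t ∈ sub A X σ cl (stateAt A X σ cl ρ N).idx := by
    intro t ht
    rw [← (hm t ht).2]
    by_contra h
    simpa [stateAt_entry_eq_none_iff.2 h] using (hm t ht).1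
  refine wonBy_of_follows_winMove (mullerPayoff_prefixIndependent Ω)
    (fun t ht => ⟨hmem t ht, (hρ t).2⟩) (hsub _ _ (hmem m le_rfl)) fun t ht hP => ?_
  rw [next_eq_winMove hsub hcons hP (hm t ht).1, (hm t ht).2]

end Play

theorem fullyWins (hX : Subarena A X) {Ω : Set (Set α)}
    (hsub : ∀ i, FullyWins A (sub A X σ cl i) (MullerPayoff Ω) σ)
    (hchildren : ∀ S ⊆ X, (∀ M ∈ cl, ¬ S ⊆ M) → WinningFor Ω σ S) :
    FullyWins A X (MullerPayoff Ω) σ := fun _ _ =>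
  ⟨strategy A X σ cl hX Ω, fun ρ hρ _ hcons => by
    by_cases hub : ∀ n, ∃ t, n ≤ (stateAt A X σ cl ρ t).idx
    · exact wonBy_of_unbounded hρ hchildren hub
    · simp only [not_forall, not_exists, not_le] at hub
      obtain ⟨B, hB⟩ := hub
      exact wonBy_of_bounded hsub hρ hcons hB⟩

end Zielonka

section Determinacy

variable {Ω : Set (Set α)} {A : Arena α}

theorem fullyWins_of_winningFor {L : Set α} {σ : Fin 2} (hL : WinningFor Ω σ L) {X : Set α}
    (hXL : X ⊆ L) (hX : Subarena A X) (hW : WinSet A X (MullerPayoff Ω) (1 - σ) = ∅) :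
    FullyWins A X (MullerPayoff Ω) σ := by
  induction hn : L.ncard using Nat.strong_induction_on generalizing L σ X with
  | _ n ih =>
  obtain ⟨cl, hcl⟩ : ∃ cl : List (Set α),
      ∀ M, M ∈ cl ↔ Maximal (fun M => M ⊆ L ∧ WinningFor Ω (1 - σ) M) M :=
    ⟨(toFinite {M | Maximal (fun M => M ⊆ L ∧ WinningFor Ω (1 - σ) M) M}).toFinset.toList,
      by simp⟩
  refine Zielonka.fullyWins (cl := cl) hX (fun i v hv => ?_) fun S hSX hS => ?_
  · obtain ⟨⟨hML, hMwin⟩, -⟩ := (hcl _).1 (Zielonka.child_mem hv)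
    have hlt : (Zielonka.child cl i).ncard < n := hn ▸ ncard_lt_ncard
      (hML.ssubset_of_ne fun h => winningFor_one_sub.1 hMwin (h ▸ hL)) (toFinite L)
    have htrap := Zielonka.sub_trapIn (A := A) (X := X) (σ := σ) (cl := cl) i
    have hdet := winsFrom_or_winsFrom_one_sub (mullerPayoff_prefixIndependent Ω)
      (fun Y hYM hY hWY => ih _ hlt hMwin hYM hY hWY rfl) (Zielonka.sub_subset_child i)
      (subarena_of_trapIn hX htrap) hv
    rw [sub_sub_cancel] at hdet
    refine hdet.resolve_left fun hτ => ?_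
    have htrap' : TrapIn A X (1 - (1 - σ)) (Zielonka.sub A X σ cl i) := by
      rwa [sub_sub_cancel]
    have hvW : v ∈ WinSet A X (MullerPayoff Ω) (1 - σ) :=
      ⟨hv.1, winsFrom_of_trapIn hX htrap' hv hτ⟩
    rw [hW] at hvW
    exact hvW
  · by_contra hS'
    obtain ⟨M, hSM, hM⟩ := (toFinite {M | M ⊆ L ∧ WinningFor Ω (1 - σ) M}).exists_le_maximal
      ⟨hSX.trans hXL, winningFor_one_sub.2 hS'⟩
    exact hS M ((hcl M).2 hM) hSM

theorem mullerPayoff_determined {X : Set α} (hX : Subarena A X) {v : α} (hv : v ∈ X) :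
    WinsFrom A X (MullerPayoff Ω) 0 v ∨ WinsFrom A X (MullerPayoff Ω) 1 v := by
  have key : ∀ σ : Fin 2, WinningFor Ω σ univ →
      WinsFrom A X (MullerPayoff Ω) σ v ∨ WinsFrom A X (MullerPayoff Ω) (1 - σ) v :=
    fun σ hσ => winsFrom_or_winsFrom_one_sub (mullerPayoff_prefixIndependent Ω)
      (fun Y _ hY hW => fullyWins_of_winningFor hσ (subset_univ Y) hY hW) (subset_univ X) hX hv
  by_cases hΩ : WinningFor Ω 0 univ
  · exact key 0 hΩ
  · exact (key 1 (winningFor_one_sub.2 hΩ)).symm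

theorem winSet_zero_eq_diff {X : Set α} (hX : Subarena A X) :
    WinSet A X (MullerPayoff Ω) 0 = X \ WinSet A X (MullerPayoff Ω) 1 := by
  ext v
  refine ⟨fun hv => ⟨hv.1, disjoint_left.1 (winSet_disjoint hX) hv⟩, fun ⟨hv, h₁⟩ => ?_⟩
  exact ⟨hv, (mullerPayoff_determined hX hv).resolve_right fun h => h₁ ⟨hv, h⟩⟩

end Determinacy

theorem stmt9_general (A : Arena α) (Ω : Set (Set α))
    (Smax : Set α)
    (hS : Smax = ⋃₀ {X : Set α | X.Nonempty ∧ Subarena A X ∧ TrapIn A A.V 1 X ∧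
      FullyWins A X (MullerPayoff Ω) 0}) :
    Subarena A Smax ∧ TrapIn A A.V 1 Smax ∧
      FullyWins A Smax (MullerPayoff Ω) 0 ∧
      WinSet A A.V (MullerPayoff Ω) 0 = Smax ∧
      WinSet A A.V (MullerPayoff Ω) 1 = A.V \ Smax := by
  set W₁ := WinSet A A.V (MullerPayoff Ω) 1
  have hpi := mullerPayoff_prefixIndependent Ω
  have htrap : TrapIn A A.V 1 (A.V \ W₁) := winSet_compl_trapIn hpi A.subarena_V 1
  have hsub : Subarena A (A.V \ W₁) := subarena_of_trapIn A.subarena_V htrap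
  have hW₀ := winSet_zero_eq_diff (Ω := Ω) A.subarena_V
  have hfull : FullyWins A (A.V \ W₁) (MullerPayoff Ω) 0 := by
    intro v hv
    have hW := winSet_zero_eq_diff (Ω := Ω) hsub
    rw [winSet_compl_winSet_eq_empty hpi A.subarena_V 1, sdiff_empty] at hW
    rw [← hW] at hv
    exact hv.2
  have hSmax : Smax = A.V \ W₁ := by
    rw [hS]
    refine subset_antisymm (sUnion_subset fun X ⟨_, hX, hXtrap, hXwin⟩ v hv => ?_)
      fun v hv => ⟨A.V \ W₁, ⟨⟨v, hv⟩, hsub, htrap, hfull⟩, hv⟩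
    rw [← hW₀]
    exact ⟨hX.1 hv, winsFrom_of_trapIn A.subarena_V hXtrap hv (hXwin v hv)⟩
  rw [hSmax]
  exact ⟨hsub, htrap, hfull, hW₀, (sdiff_sdiff_cancel_left fun _ hv => hv.1).symm⟩

/-- Lemma 4.10, second part: if some nonempty subarena of `A`
that is a 1-trap is fully won by Player 0, then the union `S_max` of all such
sets is a subarena that is a 1-trap, Player 0 fully wins `G(S_max)`,
`Win_0(G) = S_max`, and `Win_1(G) = V ∖ S_max`. -/
theorem stmt9 (A : Arena α) (Ω : Set (Set α))
    (h : ∃ X : Set α, X.Nonempty ∧ Subarena A X ∧ TrapIn A A.V 1 X ∧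
      FullyWins A X (MullerPayoff Ω) 0)
    (Smax : Set α)
    (hS : Smax = ⋃₀ {X : Set α | X.Nonempty ∧ Subarena A X ∧ TrapIn A A.V 1 X ∧
      FullyWins A X (MullerPayoff Ω) 0}) :
    Subarena A Smax ∧ TrapIn A A.V 1 Smax ∧
      FullyWins A Smax (MullerPayoff Ω) 0 ∧
      WinSet A A.V (MullerPayoff Ω) 0 = Smax ∧
      WinSet A A.V (MullerPayoff Ω) 1 = A.V \ Smax :=
  stmt9_general A Ω Smax hS
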